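/- arXiv:2308.11121 — 2 statements merged into one kernel-verified Lean document; each statement's English description precedes it below -/
import Mathlib

section
/- Let T > 0, let E ⊆ (0,T) be a Lebesgue measurable set, and let ℓ ∈ (0,T) be a left density-one point of E, i.e. lim_{h→0⁺} |E ∩ (ℓ−h, ℓ)|/h = 1, where |·| denotes Lebesgue measure. Then for each constant q ∈ (0,1) there exists a strictly increasing sequence (ℓ_n)_{n≥1} contained in (0, ℓ) such that: (i) lim_{n→∞} ℓ_n = ℓ; (ii) ℓ_{n+2} − ℓ_{n+1} = q·(ℓ_{n+1} − ℓ_n) for all n ≥ 1; and (iii) |E ∩ (ℓ_n, ℓ_{n+1})| ≥ (ℓ_{n+1} − ℓ_n)/3 for all n ≥ 1. -/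
open MeasureTheory Filter

theorem stmt_1 (T : ℝ) (hT : 0 < T) (E : Set ℝ) (hE : MeasurableSet E)
    (hEsub : E ⊆ Set.Ioo 0 T) (ℓ : ℝ) (hℓ : ℓ ∈ Set.Ioo 0 T)
    (hdens : Tendsto (fun h : ℝ => (volume (E ∩ Set.Ioo (ℓ - h) ℓ)).toReal / h)
      (nhdsWithin 0 (Set.Ioi 0)) (nhds 1))
    (q : ℝ) (hq : q ∈ Set.Ioo (0:ℝ) 1) :
    ∃ L : ℕ → ℝ, StrictMono L ∧ (∀ n, L n ∈ Set.Ioo 0 ℓ) ∧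
      Tendsto L atTop (nhds ℓ) ∧
      (∀ n, L (n + 2) - L (n + 1) = q * (L (n + 1) - L n)) ∧
      (∀ n, (L (n + 1) - L n) / 3 ≤ (volume (E ∩ Set.Ioo (L n) (L (n + 1)))).toReal) := by
  obtain ⟨hq0, hq1⟩ := hq
  obtain ⟨hℓ0, hℓT⟩ := hℓ
  set ε : ℝ := (1 - q) / 3 with hεdef
  have hεpos : 0 < ε := by simp only [hεdef]; linarith
  have h1 : ∀ᶠ h in nhdsWithin 0 (Set.Ioi 0),
      1 - ε < (volume (E ∩ Set.Ioo (ℓ - h) ℓ)).toReal / h :=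
    hdens.eventually (eventually_gt_nhds (by linarith))
  rw [eventually_nhdsWithin_iff, Metric.eventually_nhds_iff] at h1
  obtain ⟨δ, hδ, hδ2⟩ := h1
  set a : ℝ := min (δ / 2) (ℓ / 2) with hadef
  have hapos : 0 < a := lt_min (by linarith) (by linarith)
  have haδ : a < δ := lt_of_le_of_lt (min_le_left _ _) (by linarith)
  have haℓ : a < ℓ := lt_of_le_of_lt (min_le_right _ _) (by linarith)
  have hpowpos : ∀ n : ℕ, 0 < a * q ^ n := fun n => by positivity
  have hpowle : ∀ n : ℕ, a * q ^ n ≤ a := fun n => by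
    nlinarith [pow_le_one₀ hq0.le hq1.le (n := n), hapos]
  refine ⟨fun n => ℓ - a * q ^ n, ?_, ?_, ?_, ?_, ?_⟩
  · apply strictMono_nat_of_lt_succ
    intro n
    have h0 : 0 < a * q ^ n := hpowpos n
    have : a * q ^ (n + 1) < a * q ^ n := by
      rw [pow_succ]; nlinarith
    linarith
  · intro n
    show ℓ - a * q ^ n ∈ Set.Ioo 0 ℓ
    exact ⟨by have := hpowle n; linarith, by have := hpowpos n; linarith⟩
  · have : Tendsto (fun n : ℕ => ℓ - a * q ^ n) atTop (nhds (ℓ - a * 0)) :=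
      (((tendsto_pow_atTop_nhds_zero_of_lt_one hq0.le hq1).const_mul a).const_sub ℓ)
    simpa using this
  · intro n; ring
  · intro n
    set h : ℝ := a * q ^ n with hhdef
    have hh0 : 0 < h := hpowpos n
    have hhδ : h < δ := lt_of_le_of_lt (hpowle n) haδ
    have hdist : dist h 0 < δ := by
      rw [Real.dist_eq, sub_zero, abs_of_pos hh0]; exact hhδ
    have hdens' := hδ2 hdist (Set.mem_Ioi.mpr hh0)
    have hvolpos : (1 - ε) * h < (volume (E ∩ Set.Ioo (ℓ - h) ℓ)).toReal :=
      (lt_div_iff₀ hh0).mp hdens'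
    -- abbreviations
    set Ln : ℝ := ℓ - a * q ^ n with hLn
    set Ln1 : ℝ := ℓ - a * q ^ (n + 1) with hLn1
    have hLlt : Ln < Ln1 := by
      have : a * q ^ (n + 1) < a * q ^ n := by rw [pow_succ]; nlinarith [hpowpos n]
      simp only [hLn, hLn1]; linarith
    have hLn1lt : Ln1 < ℓ := by have := hpowpos (n + 1); simp only [hLn1]; linarith
    -- subadditivity
    have hsub : E ∩ Set.Ioo (ℓ - h) ℓ ⊆
        (E ∩ Set.Ioo Ln Ln1) ∪ Set.Ico Ln1 ℓ := by
      rintro x ⟨hxE, hx1, hx2⟩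
      rcases lt_or_ge x Ln1 with hcase | hcase
      · exact Or.inl ⟨hxE, by simpa [hLn, hhdef] using hx1, hcase⟩
      · exact Or.inr ⟨hcase, hx2⟩
    have hmeas1 : volume (E ∩ Set.Ioo (ℓ - h) ℓ) ≤
        volume (E ∩ Set.Ioo Ln Ln1) + volume (Set.Ico Ln1 ℓ) :=
      le_trans (measure_mono hsub) (measure_union_le _ _)
    have hfin1 : volume (E ∩ Set.Ioo Ln Ln1) ≠ ⊤ :=
      (lt_of_le_of_lt (measure_mono Set.inter_subset_right) measure_Ioo_lt_top).ne
    have hfin2 : volume (Set.Ico Ln1 ℓ) ≠ ⊤ := measure_Ico_lt_top.ne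
    have hreal : (volume (E ∩ Set.Ioo (ℓ - h) ℓ)).toReal ≤
        (volume (E ∩ Set.Ioo Ln Ln1)).toReal + (volume (Set.Ico Ln1 ℓ)).toReal := by
      rw [← ENNReal.toReal_add hfin1 hfin2]
      exact ENNReal.toReal_mono (by simp [hfin1, hfin2, ENNReal.add_ne_top]) hmeas1
    have hvolC : (volume (Set.Ico Ln1 ℓ)).toReal = q * h := by
      rw [Real.volume_Ico, ENNReal.toReal_ofReal (by linarith)]
      simp only [hLn1, hhdef]; ring
    have hgoal : (1 - ε) * h - q * h ≤ (volume (E ∩ Set.Ioo Ln Ln1)).toReal := by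
      rw [← hvolC]; linarith
    have hlen : Ln1 - Ln = (1 - q) * h := by
      simp only [hLn, hLn1, hhdef, pow_succ]; ring
    calc (Ln1 - Ln) / 3 = (1 - q) * h / 3 := by rw [hlen]
      _ ≤ (1 - ε) * h - q * h := by simp only [hεdef]; nlinarith
      _ ≤ _ := hgoal
end

section
/- Let x₀ ∈ (0,1) and R ∈ (0,1] satisfy (x₀ − 4R, x₀ + 4R) ⊆ (0,1), and let G ⊆ (x₀ − R, x₀ + R) be a Lebesgue measurable set with |G| > 0. Then there exists a constant C > 0 such that for every λ > 0 and every finitely supported sequence (a_j)_{j≥1} of real numbers, the function f(x) := Σ_{j ≥ 1, j²π² ≤ λ} a_j sin(jπx) satisfies ∫_0^1 f(x)² dx ≤ C e^{C λ^{1/2}} ∫_G f(x)² dx. -/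
/-!
Write `f(x) = ∑_{j ≤ N} b_j sin(jπx)` with `N = ⌊√λ⌋`. For `z = e^{iπx}`, `z^N f(x)` is a
polynomial of degree `2N` in `z`, so by Lagrange interpolation `sup |f|` is at most
`(2/σ)^{2N} / (2N)!` times the largest value of `|f|` at any `2N + 1` points `t_i` with
`σ |i - j| ≤ |t_i - t_j| ≤ 1`, because then `|e^{iπt_i} - e^{iπt_j}| ≥ 2σ |i - j|`.
By Chebyshev's inequality `f² ≤ 2 ⨍_G f²` on a subset `E ⊆ G` with `|E| ≥ |G|/2`, and the
distribution function `t ↦ |E ∩ (-∞, t]|` yields such points in `E` with `σ = |E| / (2(2N+1))`.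
Hence `sup f² ≤ 2 e² (8e/|G|)^{4N} ⨍_G f²`, and `(8e/|G|)^{4N} ≤ exp(C √λ)`.
-/

open MeasureTheory Real
open Finset Polynomial
open scoped Nat ENNReal

theorem prod_range_abs_natCast_sub (i : ℕ) : ∏ j ∈ range i, |(i : ℝ) - j| = i ! := by
  induction i with
  | zero => simp
  | succ i ih =>
    rw [prod_range_succ', Nat.factorial_succ]
    push_cast
    simp only [add_sub_add_right_eq_sub, ih, sub_zero]
    rw [abs_of_pos (by positivity)]
    ring

theorem prod_erase_range_abs_natCast_sub {i n : ℕ} (h : i ≤ n) :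
    ∏ j ∈ (range (n + 1)).erase i, |(i : ℝ) - j| = i ! * (n - i)! := by
  induction n, h using Nat.le_induction with
  | base =>
    rw [range_add_one, erase_insert notMem_range_self, prod_range_abs_natCast_sub]
    simp
  | succ n hin ih =>
    rw [range_add_one, erase_insert_of_ne (by omega), prod_insert (by simp), ih,
      Nat.succ_sub hin, Nat.factorial_succ, abs_sub_comm]
    push_cast [hin]
    rw [abs_of_pos (by linarith [(Nat.cast_le (α := ℝ)).2 hin])]
    ring

theorem sum_inv_factorial_mul_factorial (n : ℕ) :
    ∑ i ∈ range (n + 1), ((i ! * (n - i)! : ℝ))⁻¹ = 2 ^ n / n ! := by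
  have hchoose : ∀ i ∈ range (n + 1), ((i ! * (n - i)! : ℝ))⁻¹ = (n.choose i : ℝ) / n ! := by
    intro i hi
    rw [Nat.cast_choose ℝ (mem_range_succ_iff.1 hi)]
    field_simp
  rw [sum_congr rfl hchoose, ← sum_div, ← Nat.cast_sum, Nat.sum_range_choose, Nat.cast_pow,
    Nat.cast_ofNat]

namespace Lagrange

theorem norm_eval_basis {𝕜 ι : Type*} [NormedField 𝕜] [DecidableEq ι]
    (s : Finset ι) (v : ι → 𝕜) (i : ι) (w : 𝕜) :
    ‖(Lagrange.basis s v i).eval w‖ = ∏ j ∈ s.erase i, ‖w - v j‖ / ‖v i - v j‖ := by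
  simp [Lagrange.basis, basisDivisor, eval_prod, norm_prod, div_eq_inv_mul]

variable {𝕜 : Type*} [NormedField 𝕜] {n : ℕ} {v : ℕ → 𝕜} {s D : ℝ}

theorem norm_eval_basis_le_of_separated (hs : 0 < s)
    (hsep : ∀ i ≤ n, ∀ j ≤ n, s * |(i : ℝ) - j| ≤ ‖v i - v j‖) {w : 𝕜}
    (hw : ∀ j ≤ n, ‖w - v j‖ ≤ D) {i : ℕ} (hi : i ≤ n) :
    ‖(Lagrange.basis (range (n + 1)) v i).eval w‖ ≤ (D / s) ^ n / (i ! * (n - i)!) := by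
  have hcard : #((range (n + 1)).erase i) = n := by simp [card_erase_of_mem, hi]
  calc ‖(Lagrange.basis (range (n + 1)) v i).eval w‖
      ≤ ∏ j ∈ (range (n + 1)).erase i, D / (s * |(i : ℝ) - j|) := by
        rw [norm_eval_basis]
        refine prod_le_prod (fun j _ => by positivity) fun j hj => ?_
        obtain ⟨hji, hj⟩ := mem_erase.1 hj
        have hj : j ≤ n := mem_range_succ_iff.1 hj
        have hdist : 0 < s * |(i : ℝ) - j| :=
          mul_pos hs (abs_pos.2 (sub_ne_zero.2 (by exact_mod_cast hji.symm)))
        exact div_le_div₀ ((norm_nonneg _).trans (hw j hj)) (hw j hj) hdist (hsep i hi j hj)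
    _ = (D / s) ^ n / (i ! * (n - i)!) := by
        rw [prod_div_distrib, prod_mul_distrib, prod_erase_range_abs_natCast_sub hi, prod_const,
          prod_const, hcard, div_pow, div_div]

theorem norm_eval_le_of_separated {P : 𝕜[X]} (hP : P.degree ≤ n) {M : ℝ} (hs : 0 < s)
    (hsep : ∀ i ≤ n, ∀ j ≤ n, s * |(i : ℝ) - j| ≤ ‖v i - v j‖)
    (hval : ∀ i ≤ n, ‖P.eval (v i)‖ ≤ M) {w : 𝕜} (hw : ∀ j ≤ n, ‖w - v j‖ ≤ D) :
    ‖P.eval w‖ ≤ M * (2 * D / s) ^ n / n ! := by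
  have hinj : Set.InjOn v (range (n + 1)) := by
    intro i hi j hj hvij
    by_contra hij
    have hi := mem_range_succ_iff.1 hi
    have hj := mem_range_succ_iff.1 hj
    have := hsep i hi j hj
    rw [hvij, sub_self, norm_zero] at this
    exact (mul_pos hs (abs_pos.2 (sub_ne_zero.2 (by exact_mod_cast hij)))).not_ge this
  have hM : 0 ≤ M := (norm_nonneg _).trans (hval 0 n.zero_le)
  have hP' : P.degree < #(range (n + 1)) := by
    rw [card_range]; exact hP.trans_lt (by exact_mod_cast n.lt_succ_self)
  rw [Lagrange.eq_interpolate hinj hP', Lagrange.interpolate_apply, eval_finsetSum]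
  calc ‖∑ i ∈ range (n + 1), (C (P.eval (v i)) * Lagrange.basis (range (n + 1)) v i).eval w‖
      ≤ ∑ i ∈ range (n + 1), M * ((D / s) ^ n / (i ! * (n - i)!)) := by
        refine (norm_sum_le _ _).trans (sum_le_sum fun i hi => ?_)
        have hi := mem_range_succ_iff.1 hi
        rw [eval_mul, eval_C, norm_mul]
        exact mul_le_mul (hval i hi) (norm_eval_basis_le_of_separated hs hsep hw hi)
          (norm_nonneg _) hM
    _ = M * (2 * D / s) ^ n / n ! := by
        simp_rw [div_eq_mul_inv ((D / s) ^ n), ← mul_sum, sum_inv_factorial_mul_factorial]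
        ring

end Lagrange

theorem two_mul_abs_sub_le_norm_exp_sub_exp {s t : ℝ} (h : |s - t| ≤ 1) :
    2 * |s - t| ≤
      ‖Complex.exp ((π * s : ℝ) * Complex.I) - Complex.exp ((π * t : ℝ) * Complex.I)‖ := by
  wlog hts : t ≤ s generalizing s t
  · rw [abs_sub_comm, norm_sub_rev]
    exact this (abs_sub_comm s t ▸ h) (le_of_not_ge hts)
  have hfactor : Complex.exp ((π * s : ℝ) * Complex.I) - Complex.exp ((π * t : ℝ) * Complex.I) =
      Complex.exp ((π * t : ℝ) * Complex.I) *
        (Complex.exp (Complex.I * (π * (s - t) : ℝ)) - 1) := by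
    rw [mul_sub, mul_one, ← Complex.exp_add]
    push_cast
    ring_nf
  rw [abs_of_nonneg (sub_nonneg.2 hts)] at h ⊢
  rw [hfactor, norm_mul, Complex.norm_exp_ofReal_mul_I, one_mul,
    Complex.norm_exp_I_mul_ofReal_sub_one, norm_mul, Real.norm_two, Real.norm_eq_abs]
  have hjordan := Real.mul_le_sin (x := π * (s - t) / 2) (by positivity)
    (by nlinarith [pi_pos])
  rw [abs_of_nonneg ((by positivity : (0:ℝ) ≤ 2 / π * (π * (s - t) / 2)).trans hjordan)]
  field_simp at hjordan
  linarith

noncomputable def sineSum (b : ℕ → ℝ) (N : ℕ) (x : ℝ) : ℝ :=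
  ∑ j ∈ range (N + 1), b j * sin (j * π * x)

theorem continuous_sineSum (b : ℕ → ℝ) (N : ℕ) : Continuous (sineSum b N) := by
  unfold sineSum
  fun_prop

noncomputable def sinePolynomial (b : ℕ → ℝ) (N : ℕ) : ℂ[X] :=
  ∑ j ∈ range (N + 1), C (b j / (2 * Complex.I)) * (X ^ (N + j) - X ^ (N - j))

theorem natDegree_sinePolynomial_le (b : ℕ → ℝ) (N : ℕ) :
    (sinePolynomial b N).natDegree ≤ 2 * N := by
  refine natDegree_sum_le_of_forall_le _ _ fun j hj => ?_
  have hj := mem_range_succ_iff.1 hj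
  refine natDegree_C_mul_le _ _ |>.trans <| (natDegree_sub_le _ _).trans ?_
  rw [natDegree_X_pow, natDegree_X_pow]
  omega

theorem Complex.exp_mul_I_pow_add_sub_pow_sub (θ : ℝ) {N j : ℕ} (hj : j ≤ N) :
    Complex.exp (θ * Complex.I) ^ (N + j) - Complex.exp (θ * Complex.I) ^ (N - j) =
      Complex.exp (θ * Complex.I) ^ N * (2 * Complex.I * Complex.sin (j * θ)) := by
  obtain ⟨k, rfl⟩ := Nat.exists_eq_add_of_le hj
  set z := Complex.exp (θ * Complex.I)
  have hz : z ≠ 0 := Complex.exp_ne_zero _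
  have hzj : Complex.exp (j * θ * Complex.I) = z ^ j := by
    rw [← Complex.exp_nat_mul]; ring_nf
  have hzj' : Complex.exp (-(j * θ) * Complex.I) = (z ^ j)⁻¹ := by
    rw [← hzj, ← Complex.exp_neg]; ring_nf
  rw [Complex.sin, hzj, hzj', Nat.add_sub_cancel_left]
  field_simp
  rw [Complex.I_sq]
  ring

theorem eval_sinePolynomial (b : ℕ → ℝ) (N : ℕ) (x : ℝ) :
    (sinePolynomial b N).eval (Complex.exp ((π * x : ℝ) * Complex.I)) =
      Complex.exp ((π * x : ℝ) * Complex.I) ^ N * (sineSum b N x : ℂ) := by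
  simp only [sinePolynomial, sineSum, eval_finsetSum, Complex.ofReal_sum, mul_sum]
  refine sum_congr rfl fun j hj => ?_
  rw [eval_mul, eval_C, eval_sub, eval_pow, eval_pow, eval_X,
    Complex.exp_mul_I_pow_add_sub_pow_sub _ (mem_range_succ_iff.1 hj)]
  push_cast
  field_simp

theorem norm_eval_sinePolynomial (b : ℕ → ℝ) (N : ℕ) (x : ℝ) :
    ‖(sinePolynomial b N).eval (Complex.exp ((π * x : ℝ) * Complex.I))‖ = |sineSum b N x| := by
  rw [eval_sinePolynomial, norm_mul, norm_pow, Complex.norm_exp_ofReal_mul_I, one_pow, one_mul,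
    Complex.norm_real, Real.norm_eq_abs]

noncomputable def volumeIic (E : Set ℝ) (t : ℝ) : ℝ := volume.real (E ∩ Set.Iic t)

namespace volumeIic

variable {E : Set ℝ}

theorem eq_add (hE : volume E ≠ ∞) {s t : ℝ} (hst : s ≤ t) :
    volumeIic E t = volumeIic E s + volume.real (E ∩ Set.Ioc s t) := by
  have hsplit := measureReal_inter_add_sdiff (s := E ∩ Set.Iic t) (measurableSet_Iic (a := s))
    (measure_ne_top_of_subset Set.inter_subset_left hE)
  rwa [Set.inter_assoc, Set.Iic_inter_Iic, min_eq_right hst, Set.inter_sdiff_assoc,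
    Set.Iic_sdiff_Iic, eq_comm] at hsplit

theorem monotone (hE : volume E ≠ ∞) : Monotone (volumeIic E) := fun s t hst => by
  rw [eq_add hE hst]
  exact le_add_of_nonneg_right measureReal_nonneg

theorem le_add_sub (hE : volume E ≠ ∞) {s t : ℝ} (hst : s ≤ t) :
    volumeIic E t ≤ volumeIic E s + (t - s) := by
  rw [eq_add hE hst]
  gcongr
  calc volume.real (E ∩ Set.Ioc s t) ≤ volume.real (Set.Ioc s t) :=
        measureReal_mono Set.inter_subset_right (by simp)
    _ = t - s := by simp [hst]

theorem continuous (hE : volume E ≠ ∞) : Continuous (volumeIic E) := by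
  refine (LipschitzWith.of_le_add fun s t => ?_).continuous
  rcases le_total s t with hst | hts
  · exact (monotone hE hst).trans (le_add_of_nonneg_right dist_nonneg)
  · simpa [Real.dist_eq, abs_of_nonneg (sub_nonneg.2 hts)] using le_add_sub hE hts

variable {a b : ℝ}

theorem eq_zero_of_subset (hE : E ⊆ Set.Icc a b) : volumeIic E a = 0 := by
  have hsub : E ∩ Set.Iic a ⊆ {a} := fun x hx => le_antisymm hx.2 (hE hx.1).1
  simp [volumeIic, Measure.real, measure_mono_null hsub Real.volume_singleton]

theorem eq_measureReal_of_subset (hE : E ⊆ Set.Icc a b) : volumeIic E b = volume.real E := by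
  rw [volumeIic, Set.inter_eq_left.2 fun x hx => Set.mem_Iic.2 (hE hx).2]

theorem exists_mem_Icc (hE : E ⊆ Set.Icc a b) {y y' : ℝ} (hy : 0 ≤ y) (hyy' : y < y')
    (hy' : y' ≤ volume.real E) : ∃ t ∈ E, volumeIic E t ∈ Set.Icc y y' := by
  have hEfin : volume E ≠ ∞ := measure_ne_top_of_subset hE (by simp)
  obtain ⟨x, hx⟩ : E.Nonempty := nonempty_of_measure_ne_zero fun h => by
    rw [Measure.real, h, ENNReal.toReal_zero] at hy'
    linarith
  have hivt := intermediate_value_Icc ((hE hx).1.trans (hE hx).2) (continuous hEfin).continuousOn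
  rw [eq_zero_of_subset hE, eq_measureReal_of_subset hE] at hivt
  obtain ⟨p, -, hp⟩ := hivt ⟨hy, hyy'.le.trans hy'⟩
  obtain ⟨q, -, hq⟩ := hivt ⟨hy.trans hyy'.le, hy'⟩
  have hpq : p ≤ q := by
    by_contra! hqp
    exact (hyy'.trans_le (hq ▸ hp ▸ monotone hEfin hqp.le)).false
  have hpos : volume (E ∩ Set.Ioc p q) ≠ 0 := by
    intro h0
    have := eq_add hEfin hpq
    rw [hp, hq, Measure.real, h0, ENNReal.toReal_zero, add_zero] at this
    exact hyy'.ne' this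
  obtain ⟨t, htE, htpq⟩ := nonempty_of_measure_ne_zero hpos
  exact ⟨t, htE, hp ▸ monotone hEfin htpq.1.le, hq ▸ monotone hEfin htpq.2⟩

end volumeIic

theorem exists_separated_points {E : Set ℝ} {a b : ℝ} (hE : E ⊆ Set.Icc a b)
    (hEpos : 0 < volume.real E) (n : ℕ) :
    ∃ t : ℕ → ℝ, (∀ i ≤ n, t i ∈ E) ∧
      ∀ i ≤ n, ∀ j ≤ n, volume.real E / (2 * (n + 1)) * |(i : ℝ) - j| ≤ |t i - t j| := by
  have hEfin : volume E ≠ ∞ := measure_ne_top_of_subset hE (by simp)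
  set δ := volume.real E / (n + 1) with hδ
  have hδpos : 0 < δ := by positivity
  have hvol : volume.real E = (n + 1) * δ := by rw [hδ]; field_simp
  -- the `i`-th point is taken where the volume of `E` to its left is about `i δ`
  have hpoint : ∀ i ≤ n, ∃ t ∈ E, volumeIic E t ∈ Set.Icc (i * δ) (i * δ + δ / 2) := by
    intro i hi
    have hi : (i : ℝ) ≤ n := by exact_mod_cast hi
    refine volumeIic.exists_mem_Icc hE (by positivity) (by linarith) ?_
    rw [hvol]; nlinarith
  choose! t htE htF using hpoint
  have hlt : ∀ i ≤ n, ∀ j ≤ n, i < j → δ / 2 * ((j : ℝ) - i) ≤ t j - t i := by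
    intro i hi j hj hij
    have hij : (i : ℝ) + 1 ≤ j := by exact_mod_cast hij
    have hF : δ / 2 * ((j : ℝ) - i) ≤ volumeIic E (t j) - volumeIic E (t i) := by
      nlinarith [(htF i hi).2, (htF j hj).1]
    have hle : t i ≤ t j := by
      by_contra! hji
      nlinarith [volumeIic.monotone hEfin hji.le]
    linarith [volumeIic.le_add_sub hEfin hle]
  refine ⟨t, htE, fun i hi j hj => ?_⟩
  rw [show volume.real E / (2 * (n + 1)) = δ / 2 by rw [hδ]; field_simp]
  wlog hij : i ≤ j generalizing i j
  · rw [abs_sub_comm, abs_sub_comm (t i)]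
    exact this j hj i hi (le_of_not_ge hij)
  rcases hij.eq_or_lt with rfl | hij
  · simp
  · have hij' : (i : ℝ) ≤ j := by exact_mod_cast hij.le
    rw [abs_sub_comm, abs_of_nonneg (sub_nonneg.2 hij'), abs_sub_comm]
    exact (hlt i hi j hj hij).trans (le_abs_self _)

theorem measureReal_le_two_mul_measureReal_inter_setOf_le_two_mul_setAverage {α : Type*}
    [MeasurableSpace α] {μ : Measure α} {f : α → ℝ} {G : Set α} (hG : μ G ≠ ∞)
    (hf : Measurable f) (hfG : IntegrableOn f G μ) (hf0 : ∀ x, 0 ≤ f x) :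
    μ.real G ≤ 2 * μ.real (G ∩ {x | f x ≤ 2 * ⨍ x in G, f x ∂μ}) := by
  set c := 2 * ⨍ x in G, f x ∂μ
  have hsplit :=
    measureReal_inter_add_sdiff (s := G) (measurableSet_le hf (measurable_const (a := c))) hG
  suffices hdiff : 2 * μ.real (G \ {x | f x ≤ c}) ≤ μ.real G by linarith
  have hGfin : μ.restrict G Set.univ ≠ ∞ := by rwa [Measure.restrict_apply_univ]
  have hrestrict : μ.real (G \ {x | f x ≤ c}) = (μ.restrict G).real {x | c < f x} := by
    rw [measureReal_restrict_apply (measurableSet_lt measurable_const hf)]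
    congr 1
    ext x
    simp [and_comm]
  rcases (measureReal_nonneg (μ := μ) (s := G)).eq_or_lt with hm | hm
  · rw [← hm]
    linarith [measureReal_mono (μ := μ) (Set.sdiff_subset (s := G) (t := {x | f x ≤ c})) hG]
  have hint : ∫ x in G, f x ∂μ = μ.real G * c / 2 := by
    simp only [c, setAverage_eq, smul_eq_mul]
    field_simp
  have hc : 0 ≤ c := by
    have := setIntegral_nonneg_of_ae (s := G) (μ := μ) (Filter.Eventually.of_forall hf0)
    nlinarith
  rw [hrestrict]
  rcases hc.eq_or_lt with hc | hc
  · have hae : f =ᵐ[μ.restrict G] 0 :=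
      (integral_eq_zero_iff_of_nonneg hf0 hfG).1 (by rw [hint, ← hc]; ring)
    have hnull : μ.restrict G {x | c < f x} = 0 :=
      measure_mono_null (fun x (hx : c < f x) => (hc.trans_lt hx).ne') (ae_iff.1 hae)
    simp [Measure.real, hnull]
  · have hmarkov := mul_meas_ge_le_integral_of_nonneg (Filter.Eventually.of_forall hf0) hfG c
    rw [hint] at hmarkov
    have hlt_le : (μ.restrict G).real {x | c < f x} ≤ (μ.restrict G).real {x | c ≤ f x} :=
      measureReal_mono (fun x (hx : c < f x) => hx.le)
        (measure_ne_top_of_subset (Set.subset_univ _) hGfin)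
    nlinarith

theorem abs_sineSum_le_of_separated (b : ℕ → ℝ) (N : ℕ) {t : ℕ → ℝ} {σ M : ℝ} (hσ : 0 < σ)
    (hsep : ∀ i ≤ 2 * N, ∀ j ≤ 2 * N, σ * |(i : ℝ) - j| ≤ |t i - t j|)
    (hdiam : ∀ i ≤ 2 * N, ∀ j ≤ 2 * N, |t i - t j| ≤ 1)
    (hval : ∀ i ≤ 2 * N, |sineSum b N (t i)| ≤ M) (x : ℝ) :
    |sineSum b N x| ≤ M * (2 / σ) ^ (2 * N) / (2 * N)! := by
  have hbound := Lagrange.norm_eval_le_of_separated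
    (degree_le_of_natDegree_le (natDegree_sinePolynomial_le b N)) (mul_pos two_pos hσ)
    (v := fun i => Complex.exp ((π * t i : ℝ) * Complex.I)) (D := 2)
    (fun i hi j hj => by
      rw [mul_assoc]
      exact (mul_le_mul_of_nonneg_left (hsep i hi j hj) two_pos.le).trans
        (two_mul_abs_sub_le_norm_exp_sub_exp (hdiam i hi j hj)))
    (fun i hi => (norm_eval_sinePolynomial b N (t i)).trans_le (hval i hi))
    (w := Complex.exp ((π * x : ℝ) * Complex.I))
    (fun j _ => (norm_sub_le _ _).trans_eq (by
      rw [Complex.norm_exp_ofReal_mul_I, Complex.norm_exp_ofReal_mul_I]; norm_num))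
  rw [norm_eval_sinePolynomial] at hbound
  convert hbound using 4
  ring

theorem abs_sineSum_le_of_measure (b : ℕ → ℝ) (N : ℕ) {E : Set ℝ} {a M : ℝ}
    (hE : E ⊆ Set.Icc a (a + 1)) (hEpos : 0 < volume.real E)
    (hM : ∀ x ∈ E, |sineSum b N x| ≤ M) (x : ℝ) :
    |sineSum b N x| ≤ exp 1 * (4 * exp 1 / volume.real E) ^ (2 * N) * M := by
  obtain ⟨t, htE, hsep⟩ := exists_separated_points hE hEpos (2 * N)
  have hdiam : ∀ i ≤ 2 * N, ∀ j ≤ 2 * N, |t i - t j| ≤ 1 := fun i hi j hj => by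
    have hti := hE (htE i hi)
    have htj := hE (htE j hj)
    rw [abs_sub_le_iff]
    constructor <;> linarith [hti.1, hti.2, htj.1, htj.2]
  have hM0 : 0 ≤ M := (abs_nonneg _).trans (hM _ (htE 0 (Nat.zero_le _)))
  set n := 2 * N
  calc |sineSum b N x|
      ≤ M * (2 / (volume.real E / (2 * (n + 1)))) ^ n / n ! :=
        abs_sineSum_le_of_separated b N (by positivity) hsep hdiam (fun i hi => hM _ (htE i hi)) x
    _ = M * (4 / volume.real E) ^ n * ((n + 1 : ℝ) ^ n / n !) := by
        rw [show (2 : ℝ) / (volume.real E / (2 * (n + 1))) = 4 / volume.real E * (n + 1) by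
          field_simp; ring, mul_pow]
        ring
    _ ≤ M * (4 / volume.real E) ^ n * exp (n + 1) := by
        gcongr
        exact pow_div_factorial_le_exp (x := n + 1) (by positivity) n
    _ = exp 1 * (4 * exp 1 / volume.real E) ^ n * M := by
        rw [exp_add, ← exp_one_pow]
        ring

theorem sq_sineSum_le_setAverage (b : ℕ → ℝ) (N : ℕ) {G : Set ℝ} {a : ℝ}
    (hG : G ⊆ Set.Icc a (a + 1)) (hGpos : 0 < volume.real G) (x : ℝ) :
    sineSum b N x ^ 2 ≤
      2 * (exp 1 * (8 * exp 1 / volume.real G) ^ (2 * N)) ^ 2 * ⨍ y in G, sineSum b N y ^ 2 := by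
  set f := sineSum b N
  have hGfin : volume G ≠ ∞ := measure_ne_top_of_subset hG (by simp)
  set c := 2 * ⨍ y in G, f y ^ 2
  have hc : 0 ≤ c := by
    have : 0 ≤ ⨍ y in G, f y ^ 2 := by
      rw [setAverage_eq']; exact integral_nonneg fun y => sq_nonneg _
    positivity
  set E := G ∩ {y | f y ^ 2 ≤ c}
  have hchebyshev : volume.real G ≤ 2 * volume.real E :=
    measureReal_le_two_mul_measureReal_inter_setOf_le_two_mul_setAverage hGfin
      ((continuous_sineSum b N).pow 2).measurable
      (((continuous_sineSum b N).pow 2).integrableOn_Icc.mono_set hG) fun _ => sq_nonneg _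
  have hEpos : 0 < volume.real E := by linarith
  have hremez := abs_sineSum_le_of_measure b N (Set.inter_subset_left.trans hG) hEpos
    (M := √c) (fun y hy => abs_le_sqrt hy.2) x
  have hK : 4 * exp 1 / volume.real E ≤ 8 * exp 1 / volume.real G := by
    rw [div_le_div_iff₀ hEpos hGpos]
    nlinarith [exp_pos 1]
  calc f x ^ 2 = |f x| ^ 2 := (sq_abs _).symm
    _ ≤ (exp 1 * (8 * exp 1 / volume.real G) ^ (2 * N) * √c) ^ 2 := by
        gcongr
        exact hremez.trans (by gcongr)
    _ = _ := by rw [mul_pow, sq_sqrt hc]; ring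

theorem tsum_ite_eq_sineSum (a : ℕ → ℝ) (l x : ℝ) :
    (∑' j : ℕ, if 1 ≤ j ∧ (j : ℝ) ^ 2 * π ^ 2 ≤ l then a j * sin (j * π * x) else 0) =
      sineSum (fun j => if 1 ≤ j ∧ (j : ℝ) ^ 2 * π ^ 2 ≤ l then a j else 0) ⌊√l⌋₊ x := by
  rw [sineSum, tsum_eq_sum (s := range (⌊√l⌋₊ + 1)) fun j hj => if_neg fun hjl => hj ?_]
  · simp_rw [ite_zero_mul]
  · refine mem_range_succ_iff.2 (Nat.le_floor (le_sqrt_of_sq_le ?_))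
    have hπ : (1 : ℝ) ≤ π ^ 2 := one_le_pow₀ (by linarith [pi_gt_three])
    nlinarith [hjl.2, sq_nonneg (j : ℝ)]

theorem setIntegral_Ioo_sq_sineSum_le (b : ℕ → ℝ) (N : ℕ) {G : Set ℝ} {a : ℝ}
    (hG : G ⊆ Set.Icc a (a + 1)) (hGpos : 0 < volume.real G) :
    ∫ x in Set.Ioo (0:ℝ) 1, sineSum b N x ^ 2 ≤
      2 * exp 1 ^ 2 / volume.real G * (8 * exp 1 / volume.real G) ^ (4 * N) *
        ∫ x in G, sineSum b N x ^ 2 :=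
  calc ∫ x in Set.Ioo (0:ℝ) 1, sineSum b N x ^ 2
      ≤ ∫ x in Set.Ioo (0:ℝ) 1,
          2 * (exp 1 * (8 * exp 1 / volume.real G) ^ (2 * N)) ^ 2 * ⨍ y in G, sineSum b N y ^ 2 :=
        setIntegral_mono
          (((continuous_sineSum b N).pow 2).integrableOn_Icc.mono_set Set.Ioo_subset_Icc_self)
          (integrableOn_const (by simp)) (sq_sineSum_le_setAverage b N hG hGpos)
    _ = _ := by
        rw [setIntegral_const, setAverage_eq, Real.volume_real_Ioo_of_le zero_le_one, smul_eq_mul,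
          smul_eq_mul]
        ring

theorem stmt_10_general (x₀ R : ℝ)
    (hball : Set.Ioo (x₀ - 4 * R) (x₀ + 4 * R) ⊆ Set.Ioo (0:ℝ) 1)
    (G : Set ℝ) (hGsub : G ⊆ Set.Ioo (x₀ - R) (x₀ + R))
    (hGpos : 0 < volume G) :
    ∃ C > 0, ∀ l > 0, ∀ a : ℕ → ℝ, (Function.support a).Finite →
      (∫ x in Set.Ioo (0:ℝ) 1,
          (∑' j : ℕ, if 1 ≤ j ∧ (j : ℝ) ^ 2 * π ^ 2 ≤ l
            then a j * Real.sin (j * π * x) else 0) ^ 2) ≤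
        C * Real.exp (C * l ^ ((1:ℝ)/2)) *
          ∫ x in G,
            (∑' j : ℕ, if 1 ≤ j ∧ (j : ℝ) ^ 2 * π ^ 2 ≤ l
              then a j * Real.sin (j * π * x) else 0) ^ 2 := by
  have hG : G ⊆ Set.Icc 0 (0 + 1) := fun x hx => by
    obtain ⟨h₁, h₂⟩ := hGsub hx
    obtain ⟨h₃, h₄⟩ := hball ⟨by linarith, by linarith⟩
    exact ⟨h₃.le, by linarith⟩
  set m := volume.real G
  have hm : 0 < m := ENNReal.toReal_pos hGpos.ne' (measure_ne_top_of_subset hG (by simp))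
  have hm1 : m ≤ 1 := by simpa [m] using measureReal_mono (μ := volume) hG (by simp)
  set K := 8 * exp 1 / m
  have hK : 0 < log K := log_pos <| by
    rw [lt_div_iff₀ hm]
    nlinarith [add_one_le_exp 1]
  set C := 2 * exp 1 ^ 2 / m + 4 * log K
  refine ⟨C, by positivity, fun l _ a _ => ?_⟩
  simp only [tsum_ite_eq_sineSum]
  have hKN : K ^ (4 * ⌊√l⌋₊) ≤ exp (C * l ^ ((1:ℝ) / 2)) := by
    rw [← sqrt_eq_rpow, ← rpow_natCast, rpow_def_of_pos (by positivity), exp_le_exp]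
    have hN : (⌊√l⌋₊ : ℝ) ≤ √l := Nat.floor_le (sqrt_nonneg l)
    have hC : 4 * log K ≤ C := le_add_of_nonneg_left (by positivity)
    push_cast
    nlinarith [sqrt_nonneg l]
  refine (setIntegral_Ioo_sq_sineSum_le _ _ hG hm).trans ?_
  gcongr
  exact le_add_of_nonneg_right (by positivity)

theorem stmt_10 (x₀ R : ℝ) (hx₀ : x₀ ∈ Set.Ioo (0:ℝ) 1) (hR : R ∈ Set.Ioc (0:ℝ) 1)
    (hball : Set.Ioo (x₀ - 4 * R) (x₀ + 4 * R) ⊆ Set.Ioo (0:ℝ) 1)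
    (G : Set ℝ) (hG : MeasurableSet G) (hGsub : G ⊆ Set.Ioo (x₀ - R) (x₀ + R))
    (hGpos : 0 < volume G) :
    ∃ C > 0, ∀ l > 0, ∀ a : ℕ → ℝ, (Function.support a).Finite →
      (∫ x in Set.Ioo (0:ℝ) 1,
          (∑' j : ℕ, if 1 ≤ j ∧ (j : ℝ) ^ 2 * π ^ 2 ≤ l
            then a j * Real.sin (j * π * x) else 0) ^ 2) ≤
        C * Real.exp (C * l ^ ((1:ℝ)/2)) *
          ∫ x in G,
            (∑' j : ℕ, if 1 ≤ j ∧ (j : ℝ) ^ 2 * π ^ 2 ≤ l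
              then a j * Real.sin (j * π * x) else 0) ^ 2 :=
  stmt_10_general x₀ R hball G hGsub hGpos
end
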